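/- arXiv:1704.03637 — 5 statements merged into one kernel-verified Lean document; each statement's English description precedes it below -/
import Mathlib

section
/- Let m ≥ 2 be an integer. Then every polynomial f ∈ 𝔽₂[X] of degree m satisfies the equivalence "f divides X^(2^m) − X if and only if f is irreducible" if and only if m is an odd prime or m = 9. -/
/-!
Every irreducible factor of `X ^ 2 ^ m - X` over `𝔽₂` has degree dividing `m`, and this
polynomial is squarefree. A reducible divisor `f` of degree `m` is therefore a product of distinct
irreducibles whose degrees are proper divisors of `m`. If `m` is an odd prime (resp. `m = 9`), these
degrees all divide `e = 1` (resp. `e = 3`), so `f ∣ X ^ 2 ^ e - X`, which has degree `2 ^ e < m`.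

Otherwise either `m = 4`, where `X ^ 4 - X` itself is a reducible divisor, or `m = k * d` with
`k = 2, d ≠ 2` or `2 ≤ k ≤ d, 5 ≤ d`, and a product of `k` distinct irreducibles of degree
`d` is one. These exist because at most `d / 2 * 2 ^ (d / 2)` elements of `𝔽_{2^d}` have
degree `< d` over `𝔽₂`, while each irreducible of degree `d` has only `d` roots among the
others.
-/

open Polynomial Finset

open UniqueFactorizationMonoid in
theorem Squarefree.dvd_of_forall_irreducible_dvd {M : Type*} [CommMonoidWithZero M]
    [NormalizationMonoid M] [UniqueFactorizationMonoid M] {a b : M} (ha : Squarefree a)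
    (h : ∀ p, Irreducible p → p ∣ a → p ∣ b) : a ∣ b := by
  rcases eq_or_ne b 0 with rfl | hb
  · exact dvd_zero a
  have : Nontrivial M := ⟨⟨b, 0, hb⟩⟩
  have ha0 : a ≠ 0 := ha.ne_zero
  rw [dvd_iff_normalizedFactors_le_normalizedFactors ha0 hb,
    Multiset.le_iff_subset ((squarefree_iff_nodup_normalizedFactors ha0).mp ha)]
  intro p hp
  obtain ⟨hirr, hnorm, hpa⟩ := (mem_normalizedFactors_iff' ha0).mp hp
  exact (mem_normalizedFactors_iff' hb).mpr ⟨hirr, hnorm, h p hirr hpa⟩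

theorem le_div_two_of_dvd_of_ne {e d : ℕ} (hd : 0 < d) (h : e ∣ d) (hne : e ≠ d) :
    e ≤ d / 2 := by
  obtain ⟨t, rfl⟩ := h
  rw [Nat.le_div_iff_mul_le two_pos]
  rcases Nat.lt_or_ge t 2 with ht | ht
  · interval_cases t <;> simp_all
  · nlinarith

section FiniteField

variable {K : Type*} [Field K] [Finite K]

theorem squarefree_X_pow_card_pow_sub_X {n : ℕ} (hn : n ≠ 0) :
    Squarefree (X ^ Nat.card K ^ n - X : K[X]) := by
  have := Fintype.ofFinite K
  refine (galois_poly_separable (ringChar K) _ (dvd_pow (ringChar.dvd ?_) hn)).squarefree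
  rw [Nat.card_eq_fintype_card]
  exact FiniteField.cast_card_eq_zero K

theorem irreducible_of_dvd_X_pow_card_pow_sub_X {m e : ℕ} (he : e ≠ 0)
    (hem : Nat.card K ^ e < m) (hdiv : ∀ d, d ∣ m → d < m → d ∣ e) {f : K[X]}
    (hf : f.natDegree = m) (hdvd : f ∣ X ^ Nat.card K ^ m - X) : Irreducible f := by
  subst hf
  have hm : f.natDegree ≠ 0 := (Nat.zero_le _).trans_lt hem |>.ne'
  have hf0 : f ≠ 0 := by rintro rfl; exact hm natDegree_zero
  classical
  by_contra hirr
  have hfe : f ∣ X ^ Nat.card K ^ e - X := by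
    have hsf := (squarefree_X_pow_card_pow_sub_X hm).squarefree_of_dvd hdvd
    refine hsf.dvd_of_forall_irreducible_dvd fun g hg hgf =>
      hg.natDegree_dvd_iff_dvd_X_pow_card_pow_sub_X.mp (hdiv _ ?_ ?_)
    · exact hg.natDegree_dvd_of_dvd_X_pow_card_pow_sub_X (hgf.trans hdvd)
    · by_contra hle
      exact hirr ((associated_of_dvd_of_natDegree_le hgf hf0 (by omega)).irreducible hg)
  have := natDegree_le_of_dvd hfe
    (FiniteField.X_pow_card_pow_sub_X_ne_zero K he Finite.one_lt_card)
  rw [FiniteField.X_pow_card_pow_sub_X_natDegree_eq K he Finite.one_lt_card] at this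
  omega

end FiniteField

theorem card_filter_pow_eq_self_le (L : Type*) [Field L] [Fintype L] [DecidableEq L] {n : ℕ}
    (hn : 1 < n) : #{x : L | x ^ n = x} ≤ n := by
  have hne := FiniteField.X_pow_card_sub_X_ne_zero L hn
  calc _ ≤ (X ^ n - X : L[X]).natDegree := card_le_degree_of_subset_roots fun x hx => by
          simpa [mem_roots hne, sub_eq_zero] using (Finset.mem_filter.mp hx).2
     _ = n := FiniteField.X_pow_card_sub_X_natDegree_eq L hn

section Extension

variable (K : Type*) {L : Type*} [Field K] [Field L] [Fintype L] [Algebra K L]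

theorem card_filter_natDegree_minpoly_ne_finrank_le [Finite K] [DecidableEq L] :
    #{x : L | (minpoly K x).natDegree ≠ Module.finrank K L} ≤
      Module.finrank K L / 2 * Nat.card K ^ (Module.finrank K L / 2) := by
  set d := Module.finrank K L
  set q := Nat.card K
  have hsub : ({x : L | (minpoly K x).natDegree ≠ d} : Finset L) ⊆
      (Icc 1 (d / 2)).biUnion fun e => {x : L | x ^ q ^ e = x} := by
    intro x hx
    have hint : IsIntegral K x := .of_finite K x
    have hroot : x ^ q ^ (minpoly K x).natDegree = x := by
      simpa [sub_eq_zero] using minpoly.dvd_iff.mp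
        ((minpoly.irreducible hint).natDegree_dvd_iff_dvd_X_pow_card_pow_sub_X.mp dvd_rfl)
    simp only [mem_biUnion, mem_Icc, mem_filter, mem_univ, true_and] at hx ⊢
    exact ⟨_, ⟨minpoly.natDegree_pos hint,
      le_div_two_of_dvd_of_ne Module.finrank_pos (minpoly.degree_dvd hint) hx⟩, hroot⟩
  calc _ ≤ _ := card_le_card hsub
    _ ≤ ∑ e ∈ Icc 1 (d / 2), #{x : L | x ^ q ^ e = x} := card_biUnion_le
    _ ≤ ∑ e ∈ Icc 1 (d / 2), q ^ (d / 2) := sum_le_sum fun e he => by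
      rw [mem_Icc] at he
      exact (card_filter_pow_eq_self_le L (Nat.one_lt_pow (by omega) Finite.one_lt_card)).trans
        (Nat.pow_le_pow_right Finite.card_pos he.2)
    _ = d / 2 * q ^ (d / 2) := by simp

theorem card_filter_minpoly_eq_le [DecidableEq K] (x₀ : L) :
    #{x : L | minpoly K x = minpoly K x₀} ≤ (minpoly K x₀).natDegree := by
  have hne : (minpoly K x₀).map (algebraMap K L) ≠ 0 :=
    map_ne_zero (minpoly.ne_zero (.of_finite K x₀))
  calc _ ≤ ((minpoly K x₀).map (algebraMap K L)).natDegree :=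
        card_le_degree_of_subset_roots fun x hx => by
          have hx := (Finset.mem_filter.mp hx).2
          rw [mem_roots hne, IsRoot, eval_map_algebraMap, ← hx]
          exact minpoly.aeval K x
    _ = _ := natDegree_map _

end Extension

theorem exists_finset_monic_irreducible_natDegree_eq_finrank (K L : Type*) [Field K] [Finite K]
    [Field L] [Finite L] [Algebra K L] {k : ℕ}
    (hk : (k - 1) * Module.finrank K L +
      Module.finrank K L / 2 * Nat.card K ^ (Module.finrank K L / 2)
      < Nat.card K ^ Module.finrank K L) :
    ∃ T : Finset K[X], #T = k ∧
      ∀ g ∈ T, g.Monic ∧ Irreducible g ∧ g.natDegree = Module.finrank K L := by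
  classical
  have := Fintype.ofFinite L
  have hbad := card_filter_natDegree_minpoly_ne_finrank_le K (L := L)
  have hsplit := card_filter_add_card_filter_not (s := (univ : Finset L))
    fun x : L => (minpoly K x).natDegree = Module.finrank K L
  rw [card_univ, ← Nat.card_eq_fintype_card, Module.natCard_eq_pow_finrank (K := K)] at hsplit
  simp only [ne_eq] at hbad
  set d := Module.finrank K L
  set good : Finset L := {x | (minpoly K x).natDegree = d}
  have hgood : (k - 1) * d < #good := by omega
  have himage : k ≤ #(good.image (minpoly K)) := by
    have hfib := card_le_mul_card_image (f := minpoly K) good d fun g hg => by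
      obtain ⟨x₀, hx₀, rfl⟩ := mem_image.mp hg
      calc _ ≤ #{x : L | minpoly K x = minpoly K x₀} :=
            card_le_card (filter_subset_filter _ (subset_univ _))
        _ ≤ _ := card_filter_minpoly_eq_le K x₀
        _ = d := (mem_filter.mp hx₀).2
    have hlt := hgood.trans_le hfib
    rw [mul_comm] at hlt
    have := Nat.lt_of_mul_lt_mul_left hlt
    omega
  obtain ⟨T, hT, hTk⟩ := exists_subset_card_eq himage
  refine ⟨T, hTk, fun g hg => ?_⟩
  obtain ⟨x, hx, rfl⟩ := mem_image.mp (hT hg)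
  have hint : IsIntegral K x := .of_finite K x
  exact ⟨minpoly.monic hint, minpoly.irreducible hint, (mem_filter.mp hx).2⟩

theorem prod_dvd_of_forall_monic_irreducible_dvd {K : Type*} [Field K] {T : Finset K[X]}
    {p : K[X]} (hT : ∀ g ∈ T, g.Monic ∧ Irreducible g) (hp : ∀ g ∈ T, g ∣ p) :
    ∏ g ∈ T, g ∣ p := by
  refine prod_dvd_of_coprime (fun g hg h hh hne => ?_) hp
  rw [Function.onFun, (hT g hg).2.coprime_iff_not_dvd]
  exact fun hgh => hne (eq_of_monic_of_associated (hT g hg).1 (hT h hh).1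
    ((hT g hg).2.associated_of_dvd (hT h hh).2 hgh))

theorem exists_not_irreducible_dvd_X_pow_card_pow_sub_X (K L : Type*) [Field K] [Finite K]
    [Field L] [Finite L] [Algebra K L] {k m : ℕ} (hk : 2 ≤ k) (hm : k * Module.finrank K L = m)
    (hineq : (k - 1) * Module.finrank K L +
      Module.finrank K L / 2 * Nat.card K ^ (Module.finrank K L / 2)
      < Nat.card K ^ Module.finrank K L) :
    ∃ f : K[X], f.natDegree = m ∧ f ∣ X ^ Nat.card K ^ m - X ∧ ¬Irreducible f := by
  obtain ⟨T, hTk, hT⟩ := exists_finset_monic_irreducible_natDegree_eq_finrank K L hineq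
  obtain ⟨g, hg⟩ : T.Nonempty := card_pos.mp (by omega)
  have hdeg : (∏ g ∈ T, g).natDegree = m := by
    rw [natDegree_prod_of_monic _ _ fun g hg => (hT g hg).1,
      sum_congr rfl fun g hg => (hT g hg).2.2, sum_const, hTk, smul_eq_mul, hm]
  refine ⟨∏ g ∈ T, g, hdeg, prod_dvd_of_forall_monic_irreducible_dvd
    (fun g hg => ⟨(hT g hg).1, (hT g hg).2.1⟩) fun g hg => ?_, fun hirr => ?_⟩
  · refine (hT g hg).2.1.natDegree_dvd_iff_dvd_X_pow_card_pow_sub_X.mp ?_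
    rw [(hT g hg).2.2, ← hm]
    exact dvd_mul_left _ _
  · have := natDegree_eq_of_degree_eq (degree_eq_degree_of_associated
      ((hT g hg).2.1.associated_of_dvd hirr (dvd_prod_of_mem _ hg)))
    rw [(hT g hg).2.2, hdeg, ← hm] at this
    have := Module.finrank_pos (R := K) (M := L)
    nlinarith

theorem not_irreducible_X_pow_sub_X {K : Type*} [Field K] {n : ℕ} (hn : 1 < n) :
    ¬Irreducible (X ^ n - X : K[X]) := fun hirr => by
  have := natDegree_eq_of_degree_eq (degree_eq_degree_of_associated
    (irreducible_X.associated_of_dvd hirr (dvd_sub (dvd_pow_self X (by omega)) dvd_rfl)))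
  rw [natDegree_X, FiniteField.X_pow_card_sub_X_natDegree_eq K hn] at this
  omega

theorem mul_succ_lt_two_pow {n : ℕ} (hn : 5 ≤ n) : n * (n + 1) < 2 ^ n := by
  induction n, hn using Nat.le_induction with
  | base => norm_num
  | succ n hn ih => rw [pow_succ]; nlinarith

theorem div_two_mul_two_pow_div_two_le (d : ℕ) : d / 2 * 2 ^ (d / 2) ≤ 2 ^ (d - 1) := by
  rcases Nat.eq_zero_or_pos (d / 2) with h | h
  · simp [h]
  calc d / 2 * 2 ^ (d / 2) ≤ 2 ^ (d / 2 - 1) * 2 ^ (d / 2) :=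
        Nat.mul_le_mul_right _ (by have := (d / 2 - 1).lt_two_pow_self; omega)
    _ = 2 ^ (d / 2 - 1 + d / 2) := (pow_add _ _ _).symm
    _ ≤ 2 ^ (d - 1) := Nat.pow_le_pow_right two_pos (by omega)

theorem sub_one_mul_add_lt_two_pow {k d : ℕ} (hk : k ≤ d) (hd : 5 ≤ d) :
    (k - 1) * d + d / 2 * 2 ^ (d / 2) < 2 ^ d := by
  obtain ⟨n, rfl⟩ : ∃ n, d = n + 1 := ⟨d - 1, by omega⟩
  have hkn : (k - 1) * (n + 1) ≤ n * (n + 1) := Nat.mul_le_mul_right _ (by omega)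
  have hhalf := div_two_mul_two_pow_div_two_le (n + 1)
  rw [Nat.add_sub_cancel, pow_succ] at *
  rcases (show 4 ≤ n by omega).eq_or_lt with rfl | hn
  · norm_num at *; omega
  · have := mul_succ_lt_two_pow (show 5 ≤ n by omega)
    omega

theorem add_div_two_mul_lt_two_pow {d : ℕ} (hd : d ≠ 2) : d + d / 2 * 2 ^ (d / 2) < 2 ^ d := by
  rcases Nat.lt_or_ge d 5 with h | h
  · interval_cases d <;> simp_all
  · simpa using sub_one_mul_add_lt_two_pow (k := 2) (by omega) h

theorem exists_mul_eq_of_odd_of_not_prime {m : ℕ} (hm : 2 ≤ m) (hodd : Odd m) (hp : ¬m.Prime)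
    (h9 : m ≠ 9) : ∃ k d, k * d = m ∧ 2 ≤ k ∧ k ≤ d ∧ 5 ≤ d := by
  set k := m.minFac
  have hk : 2 ≤ k := (Nat.minFac_prime (by omega)).two_le
  have hkd : k * (m / k) = m := Nat.mul_div_cancel' m.minFac_dvd
  have hsq : k * k ≤ k * (m / k) := by rw [hkd, ← sq]; exact Nat.minFac_sq_le_self (by omega) hp
  have hle : k ≤ m / k := Nat.le_of_mul_le_mul_left hsq (by omega)
  refine ⟨k, m / k, hkd, hk, hle, ?_⟩
  have hodd' : Odd (k * (m / k)) := by rwa [hkd]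
  obtain ⟨hkodd, hdodd⟩ := Nat.odd_mul.mp hodd'
  rw [Nat.odd_iff] at hkodd hdodd
  by_contra! h
  interval_cases hd : m / k <;> interval_cases k <;> omega

theorem exists_not_irreducible_dvd_X_two_pow_sub_X_of_mul_eq {k d m : ℕ} (hk : 2 ≤ k)
    (hd : d ≠ 0) (hm : k * d = m) (hineq : (k - 1) * d + d / 2 * 2 ^ (d / 2) < 2 ^ d) :
    ∃ f : (ZMod 2)[X], f.natDegree = m ∧ f ∣ X ^ 2 ^ m - X ∧ ¬Irreducible f := by
  have hdim := GaloisField.finrank 2 hd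
  have hq := Nat.card_zmod 2
  have := exists_not_irreducible_dvd_X_pow_card_pow_sub_X (ZMod 2) (GaloisField 2 d) hk
    (hdim ▸ hm) (by rwa [hdim, hq])
  rwa [hq] at this

theorem exists_not_irreducible_dvd_X_two_pow_sub_X {m : ℕ} (hm : 2 ≤ m)
    (h : ¬(m.Prime ∧ Odd m ∨ m = 9)) :
    ∃ f : (ZMod 2)[X], f.natDegree = m ∧ f ∣ X ^ 2 ^ m - X ∧ ¬Irreducible f := by
  rcases Nat.even_or_odd m with ⟨d, rfl⟩ | hodd
  · rcases eq_or_ne d 2 with rfl | hd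
    · exact ⟨X ^ 2 ^ 2 - X, FiniteField.X_pow_card_sub_X_natDegree_eq _ (by norm_num),
        dvd_pow_pow_sub_self_of_dvd (by norm_num), not_irreducible_X_pow_sub_X (by norm_num)⟩
    · exact exists_not_irreducible_dvd_X_two_pow_sub_X_of_mul_eq le_rfl (by omega) (two_mul d)
        (by simpa using add_div_two_mul_lt_two_pow hd)
  · obtain ⟨k, d, hkd, hk, hle, hd⟩ := exists_mul_eq_of_odd_of_not_prime hm hodd
      (fun hp => h (.inl ⟨hp, hodd⟩)) (fun h9 => h (.inr h9))
    exact exists_not_irreducible_dvd_X_two_pow_sub_X_of_mul_eq hk (by omega) hkd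
      (sub_one_mul_add_lt_two_pow hle hd)

/-- For an integer `m ≥ 2`, every polynomial `f ∈ 𝔽₂[X]` of degree `m`
satisfies "`f ∣ X^(2^m) - X` iff `f` is irreducible" if and only if `m` is an odd prime
or `m = 9`. -/
theorem stmt_0 (m : ℕ) (hm : 2 ≤ m) :
    (∀ f : Polynomial (ZMod 2), f.natDegree = m →
      (f ∣ X ^ 2 ^ m - X ↔ Irreducible f)) ↔ (m.Prime ∧ Odd m) ∨ m = 9 := by
  have hq : Nat.card (ZMod 2) = 2 := Nat.card_zmod 2
  refine ⟨fun H => ?_, fun hm' f hf => ⟨fun hdvd => ?_, fun hirr => ?_⟩⟩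
  · by_contra hm'
    obtain ⟨f, hf, hdvd, hirr⟩ := exists_not_irreducible_dvd_X_two_pow_sub_X hm hm'
    exact hirr ((H f hf).mp hdvd)
  · replace hdvd : f ∣ X ^ Nat.card (ZMod 2) ^ m - X := by rwa [hq]
    rcases hm' with ⟨hp, hodd⟩ | rfl
    · refine irreducible_of_dvd_X_pow_card_pow_sub_X one_ne_zero ?_ (fun d hd hdm => ?_) hf hdvd
      · rw [hq, pow_one]
        have := Nat.odd_iff.mp hodd
        have := hp.two_le
        omega
      · rw [(Nat.dvd_prime hp).mp hd |>.resolve_right hdm.ne]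
    · refine irreducible_of_dvd_X_pow_card_pow_sub_X (e := 3) three_ne_zero (by rw [hq]; norm_num)
        (fun d hd hdm => ?_) hf hdvd
      interval_cases d <;> omega
  · have := hirr.natDegree_dvd_iff_dvd_X_pow_card_pow_sub_X.mp (dvd_refl f.natDegree)
    rwa [hq, hf] at this
end

section
/- Let m ≥ 2 be an integer. If property P₂ holds for m, then m can be written as m = p^i or m = p^i·q for primes p < q and a positive integer i (i.e., m is either a prime power, or the product of a prime power p^i and a larger prime q). -/
/-!
If `m` is neither `p ^ i` nor `p ^ i * q` with primes `p < q`, then `m = p * q * t` with primes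
`p < q ≤ t`. Take `p - 1` monic irreducibles of degree `q * t`, `q / p` of degree `p * t` and
`q % p` of degree `t`. Their product is squarefree of degree
`(p - 1) * q * t + (q / p) * p * t + (q % p) * t = m` and of order `lcm (q * t) (p * t) = m`, but
it is reducible. Enough irreducibles of degree `d` exist because fewer than `2 ^ (d / 2 + 1)`
elements of `𝔽_{2^d}` lie in a proper subfield, and each irreducible polynomial of degree `d` has
at most `d` roots there.
-/

open Polynomial

/-- The order of a nonzero squarefree `f ∈ 𝔽₂[X]`: the least positive integer `n`
with `f ∣ X^(2^n) - X`.  "`o(f) = m`" is expressed via `IsLeast`. -/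
def P2 (m : ℕ) : Prop :=
  ∀ f : Polynomial (ZMod 2), Squarefree f → f.natDegree = m →
    IsLeast {n : ℕ | 0 < n ∧ f ∣ X ^ 2 ^ n - X} m → Irreducible f

open Finset Module

namespace Nat

theorem le_div_two_of_dvd_of_lt {e d : ℕ} (h : e ∣ d) (hlt : e < d) : e ≤ d / 2 := by
  obtain ⟨c, rfl⟩ := h
  have hc : 2 ≤ c := by
    rcases c with _ | _ | c <;> simp at hlt ⊢
  exact (Nat.le_div_iff_mul_le two_pos).2 (Nat.mul_le_mul_left e hc)

theorem sq_le_two_pow {d : ℕ} (hd : 4 ≤ d) : d ^ 2 ≤ 2 ^ d := by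
  induction d, hd using Nat.le_induction with
  | base => norm_num
  | succ n hn ih => rw [pow_succ 2]; nlinarith

theorem mul_div_two_add_two_pow_le {d : ℕ} (hd : 3 ≤ d) :
    d * (d / 2) + 2 ^ (d / 2 + 1) ≤ 2 ^ d := by
  obtain ⟨n, rfl⟩ : ∃ n, d = n + 1 := ⟨d - 1, by omega⟩
  have h_pow : 2 ^ ((n + 1) / 2 + 1) ≤ 2 ^ n := Nat.pow_le_pow_right two_pos (by omega)
  have h_mul : (n + 1) * ((n + 1) / 2) ≤ 2 ^ n := by
    rcases (by omega : n = 2 ∨ 3 ≤ n) with rfl | hn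
    · norm_num
    · have h_sq : (n + 1) ^ 2 ≤ 2 ^ n * 2 := pow_succ 2 n ▸ sq_le_two_pow (by omega)
      have := Nat.mul_le_mul_left (n + 1) (Nat.div_mul_le_self (n + 1) 2)
      nlinarith
  rw [pow_succ]
  omega

theorem sub_one_mul_add_div_mul_add_mod_mul {p : ℕ} (hp : 0 < p) (q t : ℕ) :
    (p - 1) * (q * t) + q / p * (p * t) + q % p * t = p * q * t := by
  have h_q : (p - 1) * q + q = p * q := by
    rw [← Nat.succ_mul, Nat.succ_eq_add_one, Nat.sub_add_cancel hp]
  calc (p - 1) * (q * t) + q / p * (p * t) + q % p * t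
      = ((p - 1) * q + (p * (q / p) + q % p)) * t := by ring
    _ = p * q * t := by rw [Nat.div_add_mod, h_q]

theorem Prime.mul_mul_dvd_of_mul_dvd_of_mul_dvd {p q t n : ℕ} (hp : p.Prime) (hq : q.Prime)
    (hpq : p ≠ q) (hqt : q * t ∣ n) (hpt : p * t ∣ n) : p * q * t ∣ n := by
  have h := Nat.lcm_dvd hpt hqt
  rwa [Nat.lcm_mul_right, ((Nat.coprime_primes hp hq).2 hpq).lcm_eq_mul] at h

theorem eq_prime_pow_or_eq_prime_pow_mul_prime_or_eq_prime_mul_prime_mul {m : ℕ} (hm : 2 ≤ m) :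
    (∃ p i : ℕ, p.Prime ∧ 0 < i ∧ m = p ^ i) ∨
    (∃ p q i : ℕ, p.Prime ∧ q.Prime ∧ p < q ∧ 0 < i ∧ m = p ^ i * q) ∨
    ∃ p q t : ℕ, p.Prime ∧ q.Prime ∧ p < q ∧ q ≤ t ∧ m = p * q * t := by
  have hm0 : m ≠ 0 := by omega
  set p := m.minFac
  have hp : p.Prime := Nat.minFac_prime (by omega)
  obtain ⟨e, he⟩ : ∃ e, m.factorization p = e + 1 :=
    Nat.exists_eq_add_one.2 (hp.factorization_pos_of_dvd hm0 (Nat.minFac_dvd m))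
  set M := ordCompl[p] m
  have hM0 : M ≠ 0 := (Nat.ordCompl_pos p hm0).ne'
  have hm_eq : m = p ^ (e + 1) * M := by
    rw [← he]
    exact (Nat.ordProj_mul_ordCompl_eq_self m p).symm
  rcases eq_or_ne M 1 with hM | hM
  · exact .inl ⟨p, e + 1, hp, e.succ_pos, by rw [hm_eq, hM, mul_one]⟩
  set q := M.minFac
  have hq : q.Prime := Nat.minFac_prime hM
  have hqM : q ∣ M := Nat.minFac_dvd M
  have hpq : p < q := by
    refine lt_of_le_of_ne (Nat.minFac_le_of_dvd hq.two_le ?_) fun h ↦ ?_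
    · exact hqM.trans (Dvd.intro_left _ hm_eq.symm)
    · rw [← h] at hqM
      exact Nat.not_dvd_ordCompl hp hm0 hqM
  obtain ⟨w, hw⟩ := hqM
  rcases eq_or_ne w 1 with rfl | hw1
  · exact .inr (.inl ⟨p, q, e + 1, hp, hq, hpq, e.succ_pos, by rw [hm_eq, hw, mul_one]⟩)
  have hw0 : w ≠ 0 := by rintro rfl; exact hM0 hw
  -- every prime factor of `w` divides `M`, so it is at least `q = M.minFac`
  have hqw : q ≤ w := by
    refine (Nat.minFac_le_of_dvd (Nat.minFac_prime hw1).two_le ?_).trans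
      (Nat.minFac_le (by omega))
    exact (Nat.minFac_dvd w).trans (Dvd.intro_left q hw.symm)
  refine .inr (.inr ⟨p, q, p ^ e * w, hp, hq, hpq,
    hqw.trans (Nat.le_mul_of_pos_left _ (pow_pos hp.pos e)), ?_⟩)
  rw [hm_eq, hw]
  ring

end Nat

theorem card_le_of_forall_pow_eq_self {K : Type*} [Field K] {n : ℕ} (hn : 1 < n)
    {s : Finset K} (hs : ∀ x ∈ s, x ^ n = x) : #s ≤ n := by
  have hne := FiniteField.X_pow_card_sub_X_ne_zero K hn
  calc #s ≤ (X ^ n - X : K[X]).natDegree := card_le_degree_of_subset_roots fun x hx ↦ by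
        simp [mem_roots hne, hs x hx]
    _ = n := FiniteField.X_pow_card_sub_X_natDegree_eq K hn

theorem card_filter_exists_pow_pow_eq_self_lt {K : Type*} [Field K] [Fintype K] [DecidableEq K]
    {q : ℕ} (hq : 1 < q) (n : ℕ) :
    #{x : K | ∃ e ∈ (Icc 1 n : Finset ℕ), x ^ q ^ e = x} < q ^ (n + 1) :=
  calc #{x : K | ∃ e ∈ (Icc 1 n : Finset ℕ), x ^ q ^ e = x}
      ≤ #((Icc 1 n).biUnion fun e ↦ {x : K | x ^ q ^ e = x}) :=
        card_le_card fun x hx ↦ by simpa using hx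
    _ ≤ ∑ e ∈ Icc 1 n, q ^ e := by
        refine card_biUnion_le.trans (sum_le_sum fun e he ↦ ?_)
        have he_pos : e ≠ 0 := Nat.pos_iff_ne_zero.1 (mem_Icc.1 he).1
        exact card_le_of_forall_pow_eq_self (Nat.one_lt_pow he_pos hq) (by simp)
    _ < q ^ (n + 1) := Nat.geomSum_lt hq fun e he ↦ Nat.lt_succ_of_le (mem_Icc.1 he).2

section FiniteField

variable {F : Type*} [Field F] [Finite F]

theorem Finset.prod_dvd_X_pow_card_pow_sub_X_iff {S : Finset F[X]}
    (hS : ∀ g ∈ S, g.Monic ∧ Irreducible g) (n : ℕ) :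
    ∏ g ∈ S, g ∣ X ^ Nat.card F ^ n - X ↔ ∀ g ∈ S, g.natDegree ∣ n := by
  refine ⟨fun h g hg ↦ (hS g hg).2.natDegree_dvd_of_dvd_X_pow_card_pow_sub_X
    ((dvd_prod_of_mem _ hg).trans h), fun h ↦ prod_dvd_of_coprime ?_ fun g hg ↦
      (hS g hg).2.natDegree_dvd_iff_dvd_X_pow_card_pow_sub_X.1 (h g hg)⟩
  intro g hg g' hg' hne
  refine (hS g hg).2.coprime_iff_not_dvd.2 fun hdvd ↦ hne ?_
  exact eq_of_monic_of_associated (hS g hg).1 (hS g' hg').1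
    ((hS g hg).2.associated_of_dvd (hS g' hg').2 hdvd)

theorem pow_card_pow_natDegree_minpoly {K : Type*} [Field K] [Algebra F K] {x : K}
    (hx : IsIntegral F x) : x ^ Nat.card F ^ (minpoly F x).natDegree = x := by
  have h := (minpoly.irreducible hx).natDegree_dvd_iff_dvd_X_pow_card_pow_sub_X.1 dvd_rfl
  simpa [sub_eq_zero] using aeval_eq_zero_of_dvd_aeval_eq_zero h (minpoly.aeval F x)

theorem exists_finset_monic_irreducible_natDegree_eq (K : Type*) [Field K] [Fintype K]
    [Algebra F K] {d k : ℕ} (hd : finrank F K = d)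
    (hk : d * k + Nat.card F ^ (d / 2 + 1) ≤ Nat.card F ^ d) :
    ∃ s : Finset F[X], #s = k ∧ ∀ g ∈ s, g.Monic ∧ Irreducible g ∧ g.natDegree = d := by
  classical
  set q := Nat.card F
  have hd_pos : 0 < d := hd ▸ finrank_pos
  have hint (x : K) : IsIntegral F x := .of_finite F x
  obtain ⟨small, h_small, h_mem_small⟩ : ∃ small : Finset K, #small < q ^ (d / 2 + 1) ∧
      ∀ x, ∀ e ∈ Icc 1 (d / 2), x ^ q ^ e = x → x ∈ small :=
    ⟨_, card_filter_exists_pow_pow_eq_self_lt Finite.one_lt_card _,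
      fun x e he hx ↦ mem_filter.2 ⟨mem_univ x, e, he, hx⟩⟩
  have h_deg (x : K) (hx : x ∉ small) : (minpoly F x).natDegree = d := by
    have hdvd := hd ▸ minpoly.degree_dvd (hint x)
    by_contra hne
    have hlt := lt_of_le_of_ne (Nat.le_of_dvd hd_pos hdvd) hne
    exact hx (h_mem_small x _ (mem_Icc.2 ⟨minpoly.natDegree_pos (hint x),
      Nat.le_div_two_of_dvd_of_lt hdvd hlt⟩) (pow_card_pow_natDegree_minpoly (hint x)))
  have h_fiber : #smallᶜ ≤ d * #(smallᶜ.image (minpoly F)) := by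
    refine card_le_mul_card_image _ _ fun g hg ↦ ?_
    obtain ⟨x, hx, rfl⟩ := mem_image.1 hg
    calc _ ≤ ((minpoly F x).map (algebraMap F K)).natDegree :=
          card_le_degree_of_subset_roots fun y hy ↦ by
            rw [mem_val, mem_filter] at hy
            rw [mem_roots (map_ne_zero (minpoly.ne_zero (hint x))), IsRoot, eval_map_algebraMap,
              ← hy.2, minpoly.aeval]
      _ = d := by rw [natDegree_map, h_deg x (mem_compl.1 hx)]
  have h_card : #smallᶜ + #small = q ^ d := by
    rw [card_compl_add_card, ← hd, ← Nat.card_eq_fintype_card, ← natCard_eq_pow_finrank]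
  obtain ⟨s, hs, hs_card⟩ := exists_subset_card_eq (s := smallᶜ.image (minpoly F)) (n := k)
    (Nat.le_of_mul_le_mul_left (by linarith) hd_pos)
  refine ⟨s, hs_card, fun g hg ↦ ?_⟩
  obtain ⟨x, hx, rfl⟩ := mem_image.1 (hs hg)
  exact ⟨minpoly.monic (hint x), minpoly.irreducible (hint x), h_deg x (mem_compl.1 hx)⟩

end FiniteField

theorem exists_finset_monic_irreducible_zmod_two {d k : ℕ} (hd : 3 ≤ d) (hk : k ≤ d / 2) :
    ∃ s : Finset (ZMod 2)[X], #s = k ∧ ∀ g ∈ s, g.Monic ∧ Irreducible g ∧ g.natDegree = d := by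
  have := Fintype.ofFinite (GaloisField 2 d)
  refine exists_finset_monic_irreducible_natDegree_eq (GaloisField 2 d)
    (GaloisField.finrank 2 (by omega)) ?_
  rw [Nat.card_zmod]
  have := Nat.mul_le_mul_left d hk
  have := Nat.mul_div_two_add_two_pow_le hd
  omega

theorem exists_finset_of_prime_mul_prime_mul {p q t : ℕ} (hp : p.Prime) (hpq : p < q)
    (hqt : q ≤ t) :
    ∃ S : Finset (ZMod 2)[X], (∀ g ∈ S, g.Monic ∧ Irreducible g ∧
        (g.natDegree = q * t ∨ g.natDegree = p * t ∨ g.natDegree = t)) ∧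
      ∑ g ∈ S, g.natDegree = p * q * t ∧
      (∃ g ∈ S, g.natDegree = q * t) ∧ (∃ g ∈ S, g.natDegree = p * t) := by
  have hp2 := hp.two_le
  have h_t_lt : t < p * t := lt_mul_left (by omega) (by omega)
  have h_pt_lt : p * t < q * t := Nat.mul_lt_mul_of_pos_right hpq (by omega)
  have h_mod : q % p ≤ q - p := Nat.mod_eq_sub_mod hpq.le ▸ Nat.mod_le _ _
  obtain ⟨S₁, hS₁_card, hS₁⟩ := exists_finset_monic_irreducible_zmod_two (d := q * t)
    (k := p - 1) (by omega) ((Nat.le_div_iff_mul_le two_pos).2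
      (by have := Nat.mul_le_mul_left q (by omega : 2 ≤ t); omega))
  obtain ⟨S₂, hS₂_card, hS₂⟩ := exists_finset_monic_irreducible_zmod_two (d := p * t)
    (k := q / p) (by omega)
      ((Nat.div_le_div_left hp2 two_pos).trans (Nat.div_le_div_right (by omega)))
  obtain ⟨S₃, hS₃_card, hS₃⟩ := exists_finset_monic_irreducible_zmod_two (d := t) (k := q % p)
    (by omega) (by have := Nat.mod_lt q hp.pos; omega)
  obtain ⟨g₁, hg₁⟩ : S₁.Nonempty := card_pos.1 (by omega)
  obtain ⟨g₂, hg₂⟩ : S₂.Nonempty := card_pos.1 (hS₂_card ▸ Nat.div_pos hpq.le hp.pos)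
  have h₁₂ : Disjoint S₁ S₂ := disjoint_left.2 fun g h h' ↦ by
    have := (hS₁ g h).2.2; have := (hS₂ g h').2.2; omega
  have h₁₂₃ : Disjoint (S₁ ∪ S₂) S₃ := disjoint_left.2 fun g h h' ↦ by
    have := (hS₃ g h').2.2
    rcases mem_union.1 h with h | h
    · have := (hS₁ g h).2.2; omega
    · have := (hS₂ g h).2.2; omega
  refine ⟨S₁ ∪ S₂ ∪ S₃, fun g hg ↦ ?_, ?_, ⟨g₁, by simp [hg₁], (hS₁ g₁ hg₁).2.2⟩,
    ⟨g₂, by simp [hg₂], (hS₂ g₂ hg₂).2.2⟩⟩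
  · rcases mem_union.1 hg with hg | hg
    · rcases mem_union.1 hg with hg | hg
      · exact ⟨(hS₁ g hg).1, (hS₁ g hg).2.1, .inl (hS₁ g hg).2.2⟩
      · exact ⟨(hS₂ g hg).1, (hS₂ g hg).2.1, .inr (.inl (hS₂ g hg).2.2)⟩
    · exact ⟨(hS₃ g hg).1, (hS₃ g hg).2.1, .inr (.inr (hS₃ g hg).2.2)⟩
  · rw [sum_union h₁₂₃, sum_union h₁₂, sum_const_nat fun g hg ↦ (hS₁ g hg).2.2,
      sum_const_nat fun g hg ↦ (hS₂ g hg).2.2, sum_const_nat fun g hg ↦ (hS₃ g hg).2.2,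
      hS₁_card, hS₂_card, hS₃_card]
    exact Nat.sub_one_mul_add_div_mul_add_mod_mul hp.pos q t

theorem not_P2_of_finset_monic_irreducible {m : ℕ} {S : Finset (ZMod 2)[X]}
    (hS : ∀ g ∈ S, g.Monic ∧ Irreducible g) (h_deg : ∑ g ∈ S, g.natDegree = m)
    (h_ord : ∀ n, (∀ g ∈ S, g.natDegree ∣ n) ↔ m ∣ n) {g₀ : (ZMod 2)[X]} (hg₀ : g₀ ∈ S)
    (hg₀_lt : g₀.natDegree < m) : ¬ P2 m := by
  intro hP2
  have hm : 0 < m := by omega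
  have h_dvd (n : ℕ) : ∏ g ∈ S, g ∣ X ^ 2 ^ n - X ↔ m ∣ n := by
    rw [← h_ord, ← prod_dvd_X_pow_card_pow_sub_X_iff hS, Nat.card_zmod]
  have h_sqfree : Squarefree (∏ g ∈ S, g) :=
    (galois_poly_separable 2 (2 ^ m) (dvd_pow_self 2 hm.ne')).squarefree.squarefree_of_dvd
      ((h_dvd m).2 dvd_rfl)
  have h_natDegree : (∏ g ∈ S, g).natDegree = m := by
    rw [natDegree_prod _ _ fun g hg ↦ (hS g hg).2.ne_zero, h_deg]
  have h_irr := hP2 _ h_sqfree h_natDegree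
    ⟨⟨hm, (h_dvd m).2 dvd_rfl⟩, fun n ⟨hn, h⟩ ↦ Nat.le_of_dvd hn ((h_dvd n).1 h)⟩
  have := natDegree_eq_of_degree_eq <| degree_eq_degree_of_associated <|
    (hS g₀ hg₀).2.associated_of_dvd h_irr (dvd_prod_of_mem _ hg₀)
  omega

theorem not_P2_prime_mul_prime_mul {p q t : ℕ} (hp : p.Prime) (hq : q.Prime) (hpq : p < q)
    (hqt : q ≤ t) : ¬ P2 (p * q * t) := by
  obtain ⟨S, hS, h_deg, ⟨g₁, hg₁, hg₁_deg⟩, ⟨g₂, hg₂, hg₂_deg⟩⟩ :=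
    exists_finset_of_prime_mul_prime_mul hp hpq hqt
  refine not_P2_of_finset_monic_irreducible (fun g hg ↦ ⟨(hS g hg).1, (hS g hg).2.1⟩) h_deg
    (fun n ↦ ⟨fun h ↦ ?_, fun h g hg ↦ ?_⟩) hg₁ ?_
  · exact hp.mul_mul_dvd_of_mul_dvd_of_mul_dvd hq hpq.ne (hg₁_deg ▸ h g₁ hg₁)
      (hg₂_deg ▸ h g₂ hg₂)
  · rcases (hS g hg).2.2 with e | e | e <;> rw [e] <;> refine dvd_trans ?_ h
    · exact ⟨p, by ring⟩
    · exact ⟨q, by ring⟩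
    · exact ⟨p * q, by ring⟩
  · rw [hg₁_deg, mul_assoc]
    exact lt_mul_left (Nat.mul_pos hq.pos (hq.pos.trans_le hqt)) hp.one_lt

/-- If property `P₂` holds for `m ≥ 2`, then `m = p^i` or `m = p^i * q`
for primes `p < q` and a positive integer `i`. -/
theorem stmt_1 (m : ℕ) (hm : 2 ≤ m) (hP2 : P2 m) :
    (∃ p i : ℕ, p.Prime ∧ 0 < i ∧ m = p ^ i) ∨
    (∃ p q i : ℕ, p.Prime ∧ q.Prime ∧ p < q ∧ 0 < i ∧ m = p ^ i * q) := by
  rcases Nat.eq_prime_pow_or_eq_prime_pow_mul_prime_or_eq_prime_mul_prime_mul hm with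
    h | h | ⟨p, q, t, hp, hq, hpq, hqt, rfl⟩
  · exact .inl h
  · exact .inr h
  · exact absurd hP2 (not_P2_prime_mul_prime_mul hp hq hpq hqt)
end

section
/- Let p < q be primes and i a positive integer. If q > 2^(p^i), then property P₂ holds for m = p^i·q; that is, every squarefree polynomial f ∈ 𝔽₂[X] of degree p^i·q with o(f) = p^i·q is irreducible. -/
/-!
Every irreducible factor `r` of `f` has degree dividing `o(f) = p^i q`. The factors of degree
prime to `q` have degree dividing `p^i`, so they are distinct divisors of `X^(2^(p^i)) - X` and
their degrees add up to at most `2^(p^i) < q`; as `q` divides `deg f` and the degrees of all the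
other factors, that sum is `0`, so `q` divides the degree of every factor. A factor whose degree
is also divisible by `p^i` has degree `p^i q = deg f`, hence is `f`. Otherwise every factor degree
divides `p^(i-1) q`, so `f` divides `X^(2^(p^(i-1) q)) - X`, contradicting `o(f) = p^i q`.
-/

open Polynomial

namespace UniqueFactorizationMonoid

variable {M : Type*} [CommMonoidWithZero M] [NormalizationMonoid M] [UniqueFactorizationMonoid M]

theorem irreducible_of_mem_primeFactors {f r : M} (hr : r ∈ primeFactors f) : Irreducible r :=
  irreducible_of_normalized_factor r (mem_primeFactors.1 hr)

variable [DecompositionMonoid M]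

theorem prod_dvd_of_subset_primeFactors {f g : M} {s : Finset M} (hs : s ⊆ primeFactors f)
    (h : ∀ r ∈ s, r ∣ g) : ∏ r ∈ s, r ∣ g :=
  Finset.prod_dvd_of_isRelPrime (pairwise_primeFactors_isRelPrime.mono (by simpa)) h

theorem _root_.Squarefree.dvd_iff_forall_primeFactors_dvd [Nontrivial M] {f g : M}
    (hf : Squarefree f) : f ∣ g ↔ ∀ r ∈ primeFactors f, r ∣ g :=
  ⟨fun h _ hr => (dvd_of_mem_normalizedFactors (mem_primeFactors.1 hr)).trans h,
    fun h => (radical_associated hf.isRadical hf.ne_zero).symm.dvd.trans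
      (prod_dvd_of_subset_primeFactors subset_rfl h)⟩

end UniqueFactorizationMonoid

open UniqueFactorizationMonoid

namespace Polynomial

variable {K : Type*} [Field K] [DecidableEq K]

theorem _root_.Squarefree.natDegree_eq_sum_primeFactors {f : K[X]} (hf : Squarefree f) :
    f.natDegree = ∑ r ∈ primeFactors f, r.natDegree := by
  rw [← natDegree_eq_of_degree_eq (degree_eq_degree_of_associated
    (radical_associated hf.isRadical hf.ne_zero)), radical]
  exact natDegree_prod _ _ fun r hr => (irreducible_of_mem_primeFactors hr).ne_zero

variable [Finite K]

theorem _root_.Squarefree.dvd_X_pow_card_pow_sub_X_iff {f : K[X]} (hf : Squarefree f) (n : ℕ) :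
    f ∣ X ^ Nat.card K ^ n - X ↔ ∀ r ∈ primeFactors f, r.natDegree ∣ n := by
  rw [hf.dvd_iff_forall_primeFactors_dvd]
  exact forall₂_congr fun r hr =>
    (irreducible_of_mem_primeFactors hr).natDegree_dvd_iff_dvd_X_pow_card_pow_sub_X.symm

theorem sum_natDegree_le_of_subset_primeFactors {f : K[X]} {s : Finset K[X]} {a : ℕ}
    (ha : a ≠ 0) (hs : s ⊆ primeFactors f) (hdeg : ∀ r ∈ s, r.natDegree ∣ a) :
    ∑ r ∈ s, r.natDegree ≤ Nat.card K ^ a := by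
  have hirr : ∀ r ∈ s, Irreducible r := fun r hr => irreducible_of_mem_primeFactors (hs hr)
  have hdvd : ∏ r ∈ s, r ∣ X ^ Nat.card K ^ a - X := prod_dvd_of_subset_primeFactors hs
    fun r hr => (hirr r hr).natDegree_dvd_iff_dvd_X_pow_card_pow_sub_X.1 (hdeg r hr)
  calc ∑ r ∈ s, r.natDegree = (∏ r ∈ s, r).natDegree :=
        (natDegree_prod _ _ fun r hr => (hirr r hr).ne_zero).symm
    _ ≤ (X ^ Nat.card K ^ a - X : K[X]).natDegree :=
        natDegree_le_of_dvd hdvd (FiniteField.X_pow_card_pow_sub_X_ne_zero K ha Finite.one_lt_card)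
    _ = Nat.card K ^ a := FiniteField.X_pow_card_pow_sub_X_natDegree_eq K ha Finite.one_lt_card

theorem _root_.Squarefree.prime_dvd_natDegree_of_mem_primeFactors {f : K[X]} (hf : Squarefree f)
    {q a : ℕ} (hq : q.Prime) (ha : a ≠ 0) (hcard : Nat.card K ^ a < q) (hfq : q ∣ f.natDegree)
    (hdeg : ∀ r ∈ primeFactors f, r.natDegree ∣ a * q) :
    ∀ r ∈ primeFactors f, q ∣ r.natDegree := by
  classical
  set T := (primeFactors f).filter (¬ q ∣ ·.natDegree)
  have hT_lt : ∑ r ∈ T, r.natDegree < q := by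
    refine (sum_natDegree_le_of_subset_primeFactors ha (Finset.filter_subset _ _)
      fun r hr => ?_).trans_lt hcard
    obtain ⟨hr, hrq⟩ := Finset.mem_filter.1 hr
    exact ((hq.coprime_iff_not_dvd.2 hrq).symm).dvd_of_dvd_mul_right (hdeg r hr)
  have hT_dvd : q ∣ ∑ r ∈ T, r.natDegree := by
    have hsplit :=
      Finset.sum_filter_add_sum_filter_not (primeFactors f) (q ∣ ·.natDegree) natDegree
    rw [← hf.natDegree_eq_sum_primeFactors] at hsplit
    exact (Nat.dvd_add_right (Finset.dvd_sum fun r hr => (Finset.mem_filter.1 hr).2)).1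
      (hsplit ▸ hfq)
  intro r hr
  by_contra hrq
  exact (irreducible_of_mem_primeFactors hr).natDegree_pos.ne' <|
    Finset.sum_eq_zero_iff.1 (Nat.eq_zero_of_dvd_of_lt hT_dvd hT_lt) r
      (Finset.mem_filter.2 ⟨hr, hrq⟩)

end Polynomial

theorem Nat.dvd_pow_pred_mul_of_dvd_pow_mul {p i q d : ℕ} (hp : p.Prime) (hd : d ∣ p ^ i * q)
    (hpd : ¬ p ^ i ∣ d) : d ∣ p ^ (i - 1) * q := by
  obtain ⟨u, v, hu, hv, rfl⟩ := Nat.dvd_mul.1 hd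
  obtain ⟨a, hai, rfl⟩ := (Nat.dvd_prime_pow hp).1 hu
  have hai' : a < i := lt_of_le_of_ne hai fun h => hpd (h ▸ dvd_mul_right _ _)
  exact Nat.mul_dvd_mul (pow_dvd_pow p (by omega)) hv

/-- For primes `p < q` and `i ≥ 1`, if `q > 2^(p^i)` then `P₂` holds for
`m = p^i * q`. -/
theorem stmt_7 (p q i : ℕ) (hp : p.Prime) (hq : q.Prime) (hpq : p < q) (hi : 0 < i)
    (hbig : 2 ^ p ^ i < q) : P2 (p ^ i * q) := by
  rintro f hf hdeg ⟨⟨-, hfm⟩, hmin⟩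
  have hdvd_iff (n : ℕ) : f ∣ X ^ 2 ^ n - X ↔ ∀ r ∈ primeFactors f, r.natDegree ∣ n := by
    simpa only [Nat.card_zmod] using hf.dvd_X_pow_card_pow_sub_X_iff n
  have hm := (hdvd_iff _).1 hfm
  have hq_dvd := hf.prime_dvd_natDegree_of_mem_primeFactors hq (pow_ne_zero i hp.ne_zero)
    (by rwa [Nat.card_zmod]) (hdeg ▸ dvd_mul_left q _) hm
  by_contra hirr
  have hp_ndvd : ∀ r ∈ primeFactors f, ¬ p ^ i ∣ r.natDegree := by
    intro r hr hpi
    have hr_irr := irreducible_of_mem_primeFactors hr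
    have hmr : p ^ i * q ∣ r.natDegree := (Nat.Coprime.pow_left i
      ((Nat.coprime_primes hp hq).2 hpq.ne)).mul_dvd_of_dvd_of_dvd hpi (hq_dvd r hr)
    exact hirr <| (associated_of_dvd_of_natDegree_le
      (dvd_of_mem_normalizedFactors (mem_primeFactors.1 hr)) hf.ne_zero
      (hdeg ▸ Nat.le_of_dvd hr_irr.natDegree_pos hmr)).irreducible hr_irr
  have hle := hmin ⟨Nat.mul_pos (pow_pos hp.pos _) hq.pos, (hdvd_iff _).2 fun r hr =>
    Nat.dvd_pow_pred_mul_of_dvd_pow_mul hp (hm r hr) (hp_ndvd r hr)⟩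
  have hlt : p ^ (i - 1) < p ^ i := Nat.pow_lt_pow_right hp.one_lt (by omega)
  exact (Nat.mul_lt_mul_of_pos_right hlt hq.pos).not_ge hle
end

section
/- Let q be an odd prime (so that p = 2, i = 1, p^i = 2 and m = 2q). Then property P₂ holds for m = 2q if and only if q > 4 (i.e., q ≥ 5). -/
open Polynomial

theorem Squarefree.dvd_of_forall_prime_dvd {R : Type*} [CommMonoidWithZero R]
    [UniqueFactorizationMonoid R] {f h : R} (hf : Squarefree f)
    (H : ∀ p, Prime p → p ∣ f → p ∣ h) : f ∣ h := by
  nontriviality R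
  induction f using UniqueFactorizationMonoid.induction_on_prime with
  | h₁ => exact absurd hf not_squarefree_zero
  | h₂ a ha => exact ha.dvd
  | h₃ a p _ hp ih =>
    obtain ⟨hpa, -, ha⟩ := squarefree_mul_iff.mp hf
    exact hpa.mul_dvd (H p hp (dvd_mul_right p a))
      (ih ha fun r hr hra => H r hr (hra.mul_left p))

theorem Nat.dvd_or_eq_of_dvd_prime_mul_prime {p q d : ℕ} (hp : p.Prime) (hq : q.Prime)
    (h : d ∣ p * q) : d ∣ p ∨ d = q ∨ d = p * q := by
  obtain ⟨a, b, ha, hb, rfl⟩ := Nat.dvd_mul.mp h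
  rcases hq.eq_one_or_self_of_dvd b hb with rfl | rfl
  · exact .inl (by simpa using ha)
  · rcases hp.eq_one_or_self_of_dvd a ha with rfl | rfl <;> simp

section

variable {K : Type*} [Field K]

theorem Irreducible.isRelPrime_of_natDegree_ne {p r : K[X]} (hp : Irreducible p)
    (hr : Irreducible r) (hpr : p.natDegree ≠ r.natDegree) : IsRelPrime p r :=
  hp.isRelPrime_iff_not_dvd.mpr fun hdvd => hpr <| natDegree_eq_of_degree_eq <|
    degree_eq_degree_of_associated ((hr.dvd_iff.mp hdvd).resolve_left hp.not_isUnit).symm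

theorem Squarefree.dvd_X_pow_card_pow_sub_X [Finite K] {f : K[X]} (hf : Squarefree f) {n : ℕ}
    (h : ∀ p, Irreducible p → p ∣ f → p.natDegree ∣ n) : f ∣ X ^ Nat.card K ^ n - X :=
  hf.dvd_of_forall_prime_dvd fun p hp hpf =>
    hp.irreducible.natDegree_dvd_iff_dvd_X_pow_card_pow_sub_X.mp (h p hp.irreducible hpf)

theorem Squarefree.natDegree_le_card_pow [Finite K] {f : K[X]} (hf : Squarefree f) {n : ℕ}
    (hn : n ≠ 0) (h : ∀ p, Irreducible p → p ∣ f → p.natDegree ∣ n) :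
    f.natDegree ≤ Nat.card K ^ n := by
  have hK : 1 < Nat.card K := Finite.one_lt_card
  calc f.natDegree ≤ (X ^ Nat.card K ^ n - X : K[X]).natDegree :=
        natDegree_le_of_dvd (hf.dvd_X_pow_card_pow_sub_X h)
          (FiniteField.X_pow_card_pow_sub_X_ne_zero K hn hK)
    _ = Nat.card K ^ n := FiniteField.X_pow_card_pow_sub_X_natDegree_eq K hn hK

end

theorem Irreducible.natDegree_dvd_iff_dvd_X_pow_pow_sub_X {p : ℕ} [Fact p.Prime]
    {f : (ZMod p)[X]} (hf : Irreducible f) {n : ℕ} : f.natDegree ∣ n ↔ f ∣ X ^ p ^ n - X := by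
  simpa only [Nat.card_zmod] using hf.natDegree_dvd_iff_dvd_X_pow_card_pow_sub_X

theorem P2_two_mul_of_four_lt {q : ℕ} (hq : q.Prime) (hq4 : 4 < q) : P2 (2 * q) := by
  intro f hf hdeg hleast
  by_contra hirr
  have hf0 : f ≠ 0 := hf.ne_zero
  have hfac : ∀ p, Irreducible p → p ∣ f → p.natDegree ∣ 2 ∨ p.natDegree = q := by
    intro p hp hpf
    have hd := hp.natDegree_dvd_iff_dvd_X_pow_pow_sub_X.mpr (hpf.trans hleast.1.2)
    rcases Nat.dvd_or_eq_of_dvd_prime_mul_prime Nat.prime_two hq hd with h | h | h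
    · exact .inl h
    · exact .inr h
    · exact absurd ((associated_of_dvd_of_natDegree_le hpf hf0 (by omega)).irreducible hp) hirr
  have hexists_deg_q : ∀ g, g ∣ f → 4 < g.natDegree → ∃ r, Irreducible r ∧ r ∣ g ∧ r.natDegree = q := by
    intro g hgf hg4
    by_contra! hno
    have := (hf.squarefree_of_dvd hgf).natDegree_le_card_pow two_ne_zero fun r hr hrg =>
      (hfac r hr (hrg.trans hgf)).resolve_right (hno r hr hrg)
    rw [Nat.card_zmod] at this
    omega
  obtain ⟨p, hp, ⟨g, rfl⟩, hpq⟩ := hexists_deg_q f dvd_rfl (by omega)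
  obtain ⟨hpg, -, -⟩ := squarefree_mul_iff.mp hf
  have hg0 : g ≠ 0 := right_ne_zero_of_mul hf0
  have hgq : g.natDegree = q := by
    rw [natDegree_mul hp.ne_zero hg0] at hdeg
    omega
  obtain ⟨r, hr, hrg, hrq⟩ := hexists_deg_q g (dvd_mul_left g p) (by omega)
  have hg : Irreducible g := (associated_of_dvd_of_natDegree_le hrg hg0 (by omega)).irreducible hr
  have hdvd : p * g ∣ X ^ 2 ^ q - X :=
    hpg.mul_dvd (hp.natDegree_dvd_iff_dvd_X_pow_pow_sub_X.mp hpq.dvd)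
      (hg.natDegree_dvd_iff_dvd_X_pow_pow_sub_X.mp hgq.dvd)
  have := hleast.2 ⟨hq.pos, hdvd⟩
  omega

theorem irreducible_X_sq_add_X_add_one : Irreducible (X ^ 2 + X + 1 : (ZMod 2)[X]) :=
  irreducible_of_degree_le_three_of_not_isRoot
    (by rw [show (X ^ 2 + X + 1 : (ZMod 2)[X]).natDegree = 2 by compute_degree!]; decide)
    (by simp only [IsRoot.def, eval_add, eval_pow, eval_X, eval_one]; decide)

theorem irreducible_X_pow_three_add_X_add_one : Irreducible (X ^ 3 + X + 1 : (ZMod 2)[X]) :=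
  irreducible_of_degree_le_three_of_not_isRoot
    (by rw [show (X ^ 3 + X + 1 : (ZMod 2)[X]).natDegree = 3 by compute_degree!]; decide)
    (by simp only [IsRoot.def, eval_add, eval_pow, eval_X, eval_one]; decide)

theorem not_P2_six : ¬ P2 6 := by
  intro hP
  set b : (ZMod 2)[X] := X ^ 2 + X + 1
  set c : (ZMod 2)[X] := X ^ 3 + X + 1
  have hb2 : b.natDegree = 2 := by simp only [b]; compute_degree!
  have hc3 : c.natDegree = 3 := by simp only [c]; compute_degree!
  have hb : Irreducible b := irreducible_X_sq_add_X_add_one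
  have hc : Irreducible c := irreducible_X_pow_three_add_X_add_one
  have hXbc : IsRelPrime X (b * c) := IsRelPrime.mul_right
    (irreducible_X.isRelPrime_of_natDegree_ne hb (by simp [hb2]))
    (irreducible_X.isRelPrime_of_natDegree_ne hc (by simp [hc3]))
  have hbc : IsRelPrime b c := hb.isRelPrime_of_natDegree_ne hc (by simp [hb2, hc3])
  have hf : Squarefree (X * (b * c)) :=
    squarefree_mul_iff.mpr ⟨hXbc, irreducible_X.squarefree,
      squarefree_mul_iff.mpr ⟨hbc, hb.squarefree, hc.squarefree⟩⟩
  have hdeg : (X * (b * c)).natDegree = 6 := by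
    rw [natDegree_mul X_ne_zero (mul_ne_zero hb.ne_zero hc.ne_zero),
      natDegree_mul hb.ne_zero hc.ne_zero, natDegree_X, hb2, hc3]
  have hleast : IsLeast {n : ℕ | 0 < n ∧ X * (b * c) ∣ X ^ 2 ^ n - X} 6 := by
    refine ⟨⟨by norm_num, ?_⟩, fun n ⟨hn, hdvd⟩ => ?_⟩
    · exact hXbc.mul_dvd (irreducible_X.natDegree_dvd_iff_dvd_X_pow_pow_sub_X.mp (by simp))
        (hbc.mul_dvd (hb.natDegree_dvd_iff_dvd_X_pow_pow_sub_X.mp (by simp [hb2]))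
          (hc.natDegree_dvd_iff_dvd_X_pow_pow_sub_X.mp (by simp [hc3])))
    · have h2 : 2 ∣ n := hb2 ▸ hb.natDegree_dvd_iff_dvd_X_pow_pow_sub_X.mpr
        (((dvd_mul_right b c).trans (dvd_mul_left _ X)).trans hdvd)
      have h3 : 3 ∣ n := hc3 ▸ hc.natDegree_dvd_iff_dvd_X_pow_pow_sub_X.mpr
        (((dvd_mul_left c b).trans (dvd_mul_left _ X)).trans hdvd)
      exact Nat.le_of_dvd hn (Nat.Coprime.mul_dvd_of_dvd_of_dvd (by norm_num) h2 h3)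
  rcases irreducible_mul_iff.mp (hP _ hf hdeg hleast) with ⟨-, hu⟩ | ⟨-, hu⟩
  · have := natDegree_eq_zero_of_isUnit hu
    rw [natDegree_mul hb.ne_zero hc.ne_zero, hb2, hc3] at this
    omega
  · exact not_isUnit_X hu

/-- For an odd prime `q`, property `P₂` holds for `m = 2q` iff `q > 4`. -/
theorem stmt_8 (q : ℕ) (hq : q.Prime) (hodd : Odd q) : P2 (2 * q) ↔ 4 < q := by
  refine ⟨fun hP => ?_, P2_two_mul_of_four_lt hq⟩
  by_contra! hq4
  obtain rfl : q = 3 := by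
    have := hq.two_le
    interval_cases q
    · exact absurd hodd (by decide)
    · rfl
    · exact absurd hq (by decide)
  exact not_P2_six hP
end

section
/- Let f ∈ 𝔽₂[X] be a nonconstant polynomial and let φ denote the Frobenius endomorphism a ↦ a² of the quotient ring 𝔽₂[X]/(f). Then there exists a positive integer n such that the n-th iterate φ^n is the identity map on 𝔽₂[X]/(f) if and only if f is squarefree. -/
/-!
If `a ↦ a ^ k` (with `k ≥ 2`) has a positive iterate equal to the identity, then every `a`
equals `a ^ (k ^ N)` for arbitrarily large `N`, so no nonzero element is nilpotent. Conversely,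
in a finite reduced ring of characteristic `p` the Frobenius map is injective, hence a
permutation of a finite set, hence of finite order. Finally `f ≠ 0` is squarefree exactly when
`(f)` is a radical ideal, i.e. when `K[X] ⧸ (f)` is reduced, and this quotient is finite when
`K` is.
-/

open Polynomial

theorem Function.Injective.exists_iterate_eq_id {α : Type*} [Finite α] {f : α → α}
    (hf : Function.Injective f) : ∃ n, 0 < n ∧ f^[n] = id := by
  let e : Equiv.Perm α := Equiv.ofBijective f (Finite.injective_iff_bijective.mp hf)
  obtain ⟨n, hn, hen⟩ := isOfFinOrder_iff_pow_eq_one.mp (isOfFinOrder_of_finite e)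
  exact ⟨n, hn, by rw [show f = e from rfl, Equiv.Perm.iterate_eq_pow, hen]; rfl⟩

theorem isReduced_of_iterate_pow_eq_id {R : Type*} [MonoidWithZero R] {k n : ℕ} (hk : 1 < k)
    (hn : 0 < n) (h : (fun a : R => a ^ k)^[n] = id) : IsReduced R := by
  refine ⟨fun a ⟨m, ham⟩ => ?_⟩
  have hm : m ≤ k ^ (n * m) :=
    (Nat.lt_pow_self hk).le.trans (Nat.pow_le_pow_right (by omega) (Nat.le_mul_of_pos_left m hn))
  have hfix : a ^ k ^ (n * m) = a := by
    rw [← congr_fun (pow_iterate k (n * m)) a, Function.iterate_mul, h, Function.iterate_id, id]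
  rw [← hfix]
  exact pow_eq_zero_of_le hm ham

theorem exists_iterate_pow_eq_id_of_isReduced (R : Type*) [CommRing R] [Finite R] [IsReduced R]
    (p : ℕ) [ExpChar R p] : ∃ n, 0 < n ∧ (fun a : R => a ^ p)^[n] = id :=
  (frobenius_inj R p).exists_iterate_eq_id

theorem exists_iterate_pow_eq_id_iff_isReduced (R : Type*) [CommRing R] [Finite R] (p : ℕ)
    [Fact p.Prime] [CharP R p] : (∃ n, 0 < n ∧ (fun a : R => a ^ p)^[n] = id) ↔ IsReduced R :=
  ⟨fun ⟨_, hn, h⟩ => isReduced_of_iterate_pow_eq_id (Fact.out : p.Prime).one_lt hn h,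
    fun _ => exists_iterate_pow_eq_id_of_isReduced R p⟩

theorem squarefree_iff_isReduced_quotient_span_singleton {R : Type*} [CommRing R]
    [IsCancelMulZero R] [DecompositionMonoid R] {f : R} (hf : f ≠ 0) :
    Squarefree f ↔ IsReduced (R ⧸ Ideal.span {f}) := by
  rw [← isRadical_iff_squarefree_of_ne_zero hf, isRadical_iff_span_singleton,
    Ideal.isRadical_iff_quotient_reduced]

namespace Polynomial

variable {K : Type*} [Field K]

theorem finite_quotient_span_singleton [Finite K] {f : K[X]} (hf : f ≠ 0) :
    Finite (K[X] ⧸ Ideal.span {f}) :=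
  have : Module.Finite K (AdjoinRoot f) := (AdjoinRoot.powerBasis hf).finite
  show Finite (AdjoinRoot f) from Module.finite_of_finite K

theorem charP_quotient_span_singleton (p : ℕ) [CharP K p] {f : K[X]} (hf : 0 < f.natDegree) :
    CharP (K[X] ⧸ Ideal.span {f}) p :=
  have : Nontrivial (K[X] ⧸ Ideal.span {f}) := Ideal.Quotient.nontrivial_iff.mpr <| by
    rw [Ne, Ideal.span_singleton_eq_top]
    exact fun hu => hf.ne' (natDegree_eq_zero_of_isUnit hu)
  charP_of_injective_algebraMap (algebraMap K _).injective p

theorem exists_iterate_pow_eq_id_iff_squarefree [Finite K] (p : ℕ) [Fact p.Prime] [CharP K p]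
    {f : K[X]} (hf : 0 < f.natDegree) :
    (∃ n, 0 < n ∧ (fun a : K[X] ⧸ Ideal.span {f} => a ^ p)^[n] = id) ↔ Squarefree f := by
  have hf0 : f ≠ 0 := ne_zero_of_natDegree_gt hf
  have := finite_quotient_span_singleton hf0
  have := charP_quotient_span_singleton p hf
  rw [squarefree_iff_isReduced_quotient_span_singleton hf0]
  exact exists_iterate_pow_eq_id_iff_isReduced _ p

end Polynomial

/-- For nonconstant `f ∈ 𝔽₂[X]`, some positive iterate of the Frobenius
endomorphism `a ↦ a²` of `𝔽₂[X]/(f)` is the identity map if and only if `f` is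
squarefree. -/
theorem stmt_18 (f : Polynomial (ZMod 2)) (hf : 0 < f.natDegree) :
    (∃ n : ℕ, 0 < n ∧ (fun a : Polynomial (ZMod 2) ⧸ Ideal.span {f} => a ^ 2)^[n] = id) ↔
      Squarefree f :=
  exists_iterate_pow_eq_id_iff_squarefree 2 hf
end
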